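/- Let (S, μ) be a σ-finite measure space, let p* be a probability density with respect to μ that is strictly positive μ-almost everywhere, and let X_1, …, X_n be i.i.d. samples with law p*·dμ. Let 𝒩 be a finite set of nonnegative measurable functions q on S with ∫√(q·p*) dμ < ∞, and let δ ∈ (0,1). Then with probability at least 1 − δ, simultaneously for every q ∈ 𝒩: Σ_{i=1}^n log √(q(X_i)/p*(X_i)) ≤ n·(∫√(q·p*) dμ − 1) + log(|𝒩|/δ), where the left-hand side is interpreted in [−∞, ∞) with the convention log 0 = −∞. -/
import Mathlib


open MeasureTheory

lemma ennreal_log_prod {ι : Type*} (s : Finset ι) (f : ι → ENNReal) :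
    ENNReal.log (∏ i ∈ s, f i) = ∑ i ∈ s, ENNReal.log (f i) := by
  classical
  induction s using Finset.cons_induction with
  | empty => simp
  | cons a s ha ih => rw [Finset.prod_cons, Finset.sum_cons, ENNReal.log_mul_add, ih]

lemma lintegral_pi_prod_pow {S : Type*} [MeasurableSpace S] (ν : Measure S) [SigmaFinite ν]
    (f : S → ENNReal) (hf : Measurable f) (n : ℕ) :
    ∫⁻ ω, ∏ i, f (ω i) ∂(Measure.pi fun _ : Fin n => ν) = (∫⁻ s, f s ∂ν) ^ n := by
  induction n with
  | zero =>
      simp only [Finset.univ_eq_empty, Finset.prod_empty, lintegral_const, pow_zero]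
      rw [Measure.pi_univ]
      simp
  | succ n ih =>
      have hmp := measurePreserving_piFinSuccAbove (fun _ : Fin (n + 1) => ν) 0
      set e := MeasurableEquiv.piFinSuccAbove (fun _ : Fin (n + 1) => S) 0 with he
      have hg : Measurable fun p : S × (Fin n → S) => f p.1 * ∏ j, f (p.2 j) :=
        (hf.comp measurable_fst).mul
          (Finset.measurable_prod _ fun j _ =>
            hf.comp ((measurable_pi_apply j).comp measurable_snd))
      have h1 : ∀ ω : Fin (n + 1) → S,
          ∏ i, f (ω i) = f ((e ω).1) * ∏ j, f ((e ω).2 j) := by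
        intro ω
        rw [Fin.prod_univ_succ]
        rfl
      calc ∫⁻ ω, ∏ i, f (ω i) ∂(Measure.pi fun _ : Fin (n + 1) => ν)
          = ∫⁻ ω, (fun p : S × (Fin n → S) => f p.1 * ∏ j, f (p.2 j)) (e ω)
              ∂(Measure.pi fun _ : Fin (n + 1) => ν) := by
            apply lintegral_congr
            intro ω
            exact h1 ω
        _ = ∫⁻ p, f p.1 * ∏ j, f (p.2 j) ∂(ν.prod (Measure.pi fun _ : Fin n => ν)) :=
            hmp.lintegral_comp hg
        _ = (∫⁻ s, f s ∂ν) * ∫⁻ ω, ∏ j, f (ω j) ∂(Measure.pi fun _ : Fin n => ν) :=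
            lintegral_prod_mul hf.aemeasurable
              (Finset.measurable_prod _ fun j _ =>
                hf.comp (measurable_pi_apply j)).aemeasurable
        _ = (∫⁻ s, f s ∂ν) ^ (n + 1) := by rw [ih, pow_succ]; ring

/-- Uniform log-likelihood-ratio concentration: for i.i.d. samples from `p⋆ · dμ` and a
finite set `𝒩` of nonnegative measurable functions with `∫ √(q p⋆) dμ < ∞`, with
probability at least `1 - δ`, simultaneously for all `q ∈ 𝒩`,
`∑ᵢ log √(q(Xᵢ)/p⋆(Xᵢ)) ≤ n (∫ √(q p⋆) dμ - 1) + log(|𝒩|/δ)`, the left-hand side being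
interpreted in `[-∞, ∞)` (with `log 0 = -∞`). -/
theorem uniform_loglikelihood_concentration
    {S : Type*} [MeasurableSpace S] (μ : Measure S) [SigmaFinite μ]
    (pstar : S → ℝ) (hpm : Measurable pstar) (hp0 : ∀ s, 0 ≤ pstar s)
    (hp1 : ∫ s, pstar s ∂μ = 1) (hp_pos : ∀ᵐ s ∂μ, 0 < pstar s)
    (n : ℕ) (hn : 0 < n)
    (𝒩 : Finset (S → ℝ))
    (h𝒩 : ∀ q ∈ 𝒩, Measurable q ∧ (∀ s, 0 ≤ q s) ∧
      Integrable (fun s => Real.sqrt (q s * pstar s)) μ)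
    (δ : ℝ) (hδ0 : 0 < δ) (hδ1 : δ < 1) :
    ENNReal.ofReal (1 - δ) ≤
      (Measure.pi fun _ : Fin n => μ.withDensity fun s => ENNReal.ofReal (pstar s))
        {ω : Fin n → S | ∀ q ∈ 𝒩,
          (∑ i, ENNReal.log (ENNReal.ofReal (Real.sqrt (q (ω i) / pstar (ω i)))) : EReal) ≤
            (((n : ℝ) * ((∫ s, Real.sqrt (q s * pstar s) ∂μ) - 1) +
              Real.log ((𝒩.card : ℝ) / δ) : ℝ) : EReal)} := by
  classical
  set ν : Measure S := μ.withDensity fun s => ENNReal.ofReal (pstar s) with hνdef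
  have hpint : Integrable pstar μ := integrable_of_integral_eq_one hp1
  have hν_univ : ν Set.univ = 1 := by
    rw [hνdef, withDensity_apply _ MeasurableSet.univ, Measure.restrict_univ,
      ← ofReal_integral_eq_lintegral_ofReal hpint (Filter.Eventually.of_forall hp0), hp1,
      ENNReal.ofReal_one]
  haveI : IsProbabilityMeasure ν := ⟨hν_univ⟩
  set π : Measure (Fin n → S) := Measure.pi fun _ : Fin n => ν with hπdef
  haveI : IsProbabilityMeasure π := by rw [hπdef]; infer_instance
  rcases Finset.eq_empty_or_nonempty 𝒩 with hemp | hne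
  · have hset : {ω : Fin n → S | ∀ q ∈ 𝒩,
        (∑ i, ENNReal.log (ENNReal.ofReal (Real.sqrt (q (ω i) / pstar (ω i)))) : EReal) ≤
          (((n : ℝ) * ((∫ s, Real.sqrt (q s * pstar s) ∂μ) - 1) +
            Real.log ((𝒩.card : ℝ) / δ) : ℝ) : EReal)} = Set.univ := by
      ext ω; simp [hemp]
    rw [hset]
    rw [show (Measure.pi fun _ : Fin n => μ.withDensity fun s => ENNReal.ofReal (pstar s))
        Set.univ = 1 from measure_univ]
    exact ENNReal.ofReal_le_one.2 (by linarith)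
  -- notation
  set N : ℕ := 𝒩.card with hNdef
  have hN : 0 < N := Finset.card_pos.2 hne
  have hNpos : (0 : ℝ) < (N : ℝ) / δ := div_pos (by exact_mod_cast hN) hδ0
  set m : (S → ℝ) → ℝ := fun q => ∫ s, Real.sqrt (q s * pstar s) ∂μ with hmdef
  set c : (S → ℝ) → ℝ := fun q => (n : ℝ) * (m q - 1) + Real.log ((N : ℝ) / δ) with hcdef
  set a : (S → ℝ) → S → ENNReal :=
    fun q s => ENNReal.ofReal (Real.sqrt (q s / pstar s)) with hadef
  set bad : (S → ℝ) → Set (Fin n → S) :=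
    fun q => {ω | ((c q : ℝ) : EReal) < ∑ i, ENNReal.log (a q (ω i))} with hbaddef
  have key : ∀ q ∈ 𝒩, π (bad q) ≤ ENNReal.ofReal (δ / N) := by
    intro q hq
    obtain ⟨hqm, hq0, hqint⟩ := h𝒩 q hq
    have hm0 : 0 ≤ m q := integral_nonneg fun s => Real.sqrt_nonneg _
    have haq : Measurable (a q) := ((hqm.div hpm).sqrt).ennreal_ofReal
    -- ∫⁻ a q dν = ofReal (m q)
    have hint : ∫⁻ s, a q s ∂ν = ENNReal.ofReal (m q) := by
      rw [hνdef, lintegral_withDensity_eq_lintegral_mul _ hpm.ennreal_ofReal haq]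
      have heq : (fun s => (ENNReal.ofReal (pstar s)) * a q s)
          =ᵐ[μ] fun s => ENNReal.ofReal (Real.sqrt (q s * pstar s)) := by
        filter_upwards [hp_pos] with s hs
        have hps : Real.sqrt (pstar s) ≠ 0 := by
          simp [Real.sqrt_eq_zero', not_le, hs]
        rw [hadef, ← ENNReal.ofReal_mul (hp0 s)]
        congr 1
        rw [Real.sqrt_div (hq0 s), Real.sqrt_mul (hq0 s)]
        rw [show pstar s * (Real.sqrt (q s) / Real.sqrt (pstar s))
            = Real.sqrt (q s) * (pstar s / Real.sqrt (pstar s)) by ring, Real.div_sqrt]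
      calc ∫⁻ s, ((fun s => ENNReal.ofReal (pstar s)) * a q) s ∂μ
          = ∫⁻ s, ENNReal.ofReal (Real.sqrt (q s * pstar s)) ∂μ := lintegral_congr_ae heq
        _ = ENNReal.ofReal (m q) :=
            (ofReal_integral_eq_lintegral_ofReal hqint
              (Filter.Eventually.of_forall fun s => Real.sqrt_nonneg _)).symm
    have hF_meas : Measurable fun ω : Fin n → S => ∏ i, a q (ω i) :=
      Finset.measurable_prod _ fun i _ => haq.comp (measurable_pi_apply i)
    have hFint : ∫⁻ ω, ∏ i, a q (ω i) ∂π = (ENNReal.ofReal (m q)) ^ n := by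
      rw [hπdef, lintegral_pi_prod_pow ν (a q) haq n, hint]
    have hsub : bad q ⊆ {ω : Fin n → S |
        ENNReal.ofReal (Real.exp (c q)) ≤ ∏ i, a q (ω i)} := by
      intro ω hω
      have hlog : ENNReal.log (ENNReal.ofReal (Real.exp (c q)))
          < ENNReal.log (∏ i, a q (ω i)) := by
        rw [ennreal_log_prod, ENNReal.log_ofReal_of_pos (Real.exp_pos _), Real.log_exp]
        exact hω
      exact (ENNReal.log_lt_log_iff.mp hlog).le
    have hmark := meas_ge_le_lintegral_div (μ := π) hF_meas.aemeasurable
        (ε := ENNReal.ofReal (Real.exp (c q)))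
        (by simp [ENNReal.ofReal_eq_zero, not_le, Real.exp_pos])
        ENNReal.ofReal_ne_top
    calc π (bad q) ≤ π {ω : Fin n → S |
          ENNReal.ofReal (Real.exp (c q)) ≤ ∏ i, a q (ω i)} := measure_mono hsub
      _ ≤ (∫⁻ ω, ∏ i, a q (ω i) ∂π) / ENNReal.ofReal (Real.exp (c q)) := hmark
      _ = (ENNReal.ofReal (m q)) ^ n / ENNReal.ofReal (Real.exp (c q)) := by rw [hFint]
      _ ≤ ENNReal.ofReal (Real.exp ((n : ℝ) * (m q - 1))) /
            ENNReal.ofReal (Real.exp (c q)) := by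
          gcongr
          calc (ENNReal.ofReal (m q)) ^ n
              ≤ (ENNReal.ofReal (Real.exp (m q - 1))) ^ n := by
                gcongr
                linarith [Real.add_one_le_exp (m q - 1)]
            _ = ENNReal.ofReal (Real.exp (m q - 1) ^ n) := by
                rw [← ENNReal.ofReal_pow (Real.exp_pos _).le]
            _ = ENNReal.ofReal (Real.exp ((n : ℝ) * (m q - 1))) := by
                rw [Real.exp_nat_mul]
      _ = ENNReal.ofReal (δ / N) := by
          rw [← ENNReal.ofReal_div_of_pos (Real.exp_pos _), ← Real.exp_sub]
          congr 1
          rw [hcdef]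
          rw [show (n : ℝ) * (m q - 1) - ((n : ℝ) * (m q - 1) + Real.log ((N : ℝ) / δ))
              = -Real.log ((N : ℝ) / δ) by ring]
          rw [Real.exp_neg, Real.exp_log hNpos, inv_div]
  -- union bound
  have hbad : π (⋃ q ∈ 𝒩, bad q) ≤ ENNReal.ofReal δ := by
    calc π (⋃ q ∈ 𝒩, bad q) ≤ ∑ q ∈ 𝒩, π (bad q) := measure_biUnion_finset_le 𝒩 bad
      _ ≤ ∑ q ∈ 𝒩, ENNReal.ofReal (δ / N) := Finset.sum_le_sum key
      _ = (N : ENNReal) * ENNReal.ofReal (δ / N) := by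
          rw [Finset.sum_const, nsmul_eq_mul, hNdef]
      _ = ENNReal.ofReal δ := by
          rw [← ENNReal.ofReal_natCast, ← ENNReal.ofReal_mul (Nat.cast_nonneg N)]
          congr 1
          field_simp
  set good : Set (Fin n → S) := {ω : Fin n → S | ∀ q ∈ 𝒩,
      (∑ i, ENNReal.log (ENNReal.ofReal (Real.sqrt (q (ω i) / pstar (ω i)))) : EReal) ≤
        (((n : ℝ) * ((∫ s, Real.sqrt (q s * pstar s) ∂μ) - 1) +
          Real.log ((𝒩.card : ℝ) / δ) : ℝ) : EReal)} with hgooddef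
  have hcover : (Set.univ : Set (Fin n → S)) ⊆ good ∪ ⋃ q ∈ 𝒩, bad q := by
    intro ω _
    by_cases hW : ω ∈ good
    · exact Or.inl hW
    · right
      rw [hgooddef] at hW
      simp only [Set.mem_setOf_eq, not_forall] at hW
      obtain ⟨q, hq, hqlt⟩ := hW
      refine Set.mem_biUnion hq ?_
      rw [hbaddef]
      simpa [hadef, hcdef, hmdef, hNdef] using not_le.mp hqlt
  have hone : (1 : ENNReal) ≤ π good + ENNReal.ofReal δ := by
    calc (1 : ENNReal) = π Set.univ := measure_univ.symm
      _ ≤ π (good ∪ ⋃ q ∈ 𝒩, bad q) := measure_mono hcover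
      _ ≤ π good + π (⋃ q ∈ 𝒩, bad q) := measure_union_le _ _
      _ ≤ π good + ENNReal.ofReal δ := by gcongr
  have : ENNReal.ofReal (1 - δ) = 1 - ENNReal.ofReal δ := by
    rw [ENNReal.ofReal_sub _ hδ0.le, ENNReal.ofReal_one]
  rw [this]
  exact tsub_le_iff_right.mpr hone
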